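/- arXiv:2002.03849 — 4 statements merged into one kernel-verified Lean document; each statement's English description precedes it below -/
import Mathlib

section
/- For the Cauchy bridge midpoint density g with 0 ≤ L < σT, the point x = L/2 is a strict local maximum of g; specifically the second derivative of g at L/2 is negative. -/
open Real Filter

/-!
With `a = σT/2` and `u = x - L/2`, the denominator of the midpoint density is
`(x² + a²)((L - x)² + a²) = q(u) := u⁴ + b u² + c` with `b = (σ²T² - L²)/2` and
`c = ((L² + σ²T²)/4)²`, so `g(x) = A / q(u)` for a constant `A > 0`.
For `L < σT` we have `b > 0`, so the even quartic has a strict global minimum at `u = 0`,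
and there `g'' = -A q''(0) / q(0)² = -2Ab / c² < 0`.
-/

theorem deriv_deriv_const_div_of_deriv_eq_zero {Q Q' Q'' : ℝ → ℝ} (A : ℝ)
    (hQ : ∀ x, HasDerivAt Q (Q' x) x) (hQ' : ∀ x, HasDerivAt Q' (Q'' x) x)
    (hQ0 : ∀ x, Q x ≠ 0) {x₀ : ℝ} (hx₀ : Q' x₀ = 0) :
    deriv (deriv fun y => A / Q y) x₀ = -A * Q'' x₀ / Q x₀ ^ 2 := by
  have hderiv : deriv (fun y => A / Q y) = fun x => -A * Q' x / Q x ^ 2 := funext fun x =>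
    (((hasDerivAt_const x A).fun_div (hQ x) (hQ0 x)).congr_deriv (by ring)).deriv
  have hsq : HasDerivAt (fun x => Q x ^ 2) (2 * Q x₀ * Q' x₀) x₀ :=
    ((hQ x₀).fun_pow 2).congr_deriv (by ring)
  rw [hderiv, (((hQ' x₀).const_mul (-A)).fun_div hsq (pow_ne_zero 2 (hQ0 x₀))).deriv, hx₀]
  field_simp [hQ0 x₀]
  ring

def evenQuartic (b c u : ℝ) : ℝ := u ^ 4 + b * u ^ 2 + c

namespace evenQuartic

variable {b c : ℝ}

theorem hasDerivAt (b c u : ℝ) :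
    HasDerivAt (evenQuartic b c) (4 * u ^ 3 + 2 * b * u) u := by
  have := ((hasDerivAt_pow 4 u).add ((hasDerivAt_pow 2 u).const_mul b)).add_const c
  exact this.congr_deriv (by push_cast; ring)

theorem hasDerivAt_deriv (b u : ℝ) :
    HasDerivAt (fun u => 4 * u ^ 3 + 2 * b * u) (12 * u ^ 2 + 2 * b) u := by
  have := ((hasDerivAt_pow 3 u).const_mul 4).add ((hasDerivAt_id u).const_mul (2 * b))
  exact this.congr_deriv (by push_cast; ring)

theorem pos (hb : 0 ≤ b) (hc : 0 < c) (u : ℝ) : 0 < evenQuartic b c u := by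
  unfold evenQuartic
  positivity

theorem lt_of_ne_zero (hb : 0 ≤ b) {u : ℝ} (hu : u ≠ 0) :
    evenQuartic b c 0 < evenQuartic b c u := by
  unfold evenQuartic
  have : 0 < u ^ 2 := by positivity
  nlinarith

end evenQuartic

noncomputable def cauchyDensity (σ t x : ℝ) : ℝ := (σ * t / π) / (x ^ 2 + σ ^ 2 * t ^ 2)

theorem cauchyDensity_mul_div_eq_div_evenQuartic {σ T : ℝ} (hσ : 0 < σ) (hT : 0 < T)
    (L x : ℝ) :
    cauchyDensity σ (T / 2) x * cauchyDensity σ (T / 2) (L - x) / cauchyDensity σ T L =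
      σ * T * (L ^ 2 + σ ^ 2 * T ^ 2) / (4 * π) /
        evenQuartic ((σ ^ 2 * T ^ 2 - L ^ 2) / 2) (((L ^ 2 + σ ^ 2 * T ^ 2) / 4) ^ 2)
          (x - L / 2) := by
  have hπ := pi_pos
  have h₁ : 0 < x ^ 2 + σ ^ 2 * (T / 2) ^ 2 := by positivity
  have h₂ : 0 < (L - x) ^ 2 + σ ^ 2 * (T / 2) ^ 2 := by positivity
  have h₃ : 0 < L ^ 2 + σ ^ 2 * T ^ 2 := by positivity
  have hQ : evenQuartic ((σ ^ 2 * T ^ 2 - L ^ 2) / 2) (((L ^ 2 + σ ^ 2 * T ^ 2) / 4) ^ 2)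
      (x - L / 2) = (x ^ 2 + σ ^ 2 * (T / 2) ^ 2) * ((L - x) ^ 2 + σ ^ 2 * (T / 2) ^ 2) := by
    unfold evenQuartic
    ring
  rw [hQ]
  unfold cauchyDensity
  field_simp
  ring

/-- For `0 ≤ L < σT` the point `L/2` is a strict local maximum of the Cauchy
bridge midpoint density; specifically `g''(L/2) < 0`. -/
theorem cauchy_bridge_midpoint_local_max (σ T L : ℝ) (hσ : 0 < σ) (hT : 0 < T)
    (hL0 : 0 ≤ L) (hL : L < σ * T)
    (f : ℝ → ℝ → ℝ) (hf : ∀ x t, f x t = (σ * t / π) / (x ^ 2 + σ ^ 2 * t ^ 2))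
    (g : ℝ → ℝ) (hg : ∀ x, g x = f x (T / 2) * f (L - x) (T / 2) / f L T) :
    deriv (deriv g) (L / 2) < 0 ∧
      ∀ᶠ x in nhdsWithin (L / 2) {(L / 2)}ᶜ, g x < g (L / 2) := by
  set A := σ * T * (L ^ 2 + σ ^ 2 * T ^ 2) / (4 * π)
  set b := (σ ^ 2 * T ^ 2 - L ^ 2) / 2
  set c := ((L ^ 2 + σ ^ 2 * T ^ 2) / 4) ^ 2
  have hA : 0 < A := by positivity
  have hb : 0 < b := by
    have := pow_lt_pow_left₀ hL hL0 two_ne_zero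
    rw [mul_pow] at this
    simp only [b]
    linarith
  have hc : 0 < c := by positivity
  have hQ0 x : evenQuartic b c (x - L / 2) ≠ 0 := (evenQuartic.pos hb.le hc _).ne'
  have hgQ : g = fun x => A / evenQuartic b c (x - L / 2) := by
    ext x
    rw [hg, hf, hf, hf]
    exact cauchyDensity_mul_div_eq_div_evenQuartic hσ hT L x
  refine ⟨?_, eventually_nhdsWithin_of_forall fun x hx => ?_⟩
  · rw [hgQ, deriv_deriv_const_div_of_deriv_eq_zero A
      (fun x => (evenQuartic.hasDerivAt b c _).comp_sub_const x (L / 2))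
      (fun x => (evenQuartic.hasDerivAt_deriv b _).comp_sub_const x (L / 2)) hQ0
      (by ring)]
    exact div_neg_of_neg_of_pos (by rw [sub_self]; nlinarith [mul_pos hA hb])
      (pow_pos (evenQuartic.pos hb.le hc _) 2)
  · rw [hgQ]
    exact div_lt_div_of_pos_left hA (evenQuartic.pos hb.le hc _)
      (by simpa using evenQuartic.lt_of_ne_zero (c := c) hb.le (sub_ne_zero.2 hx))
end

section
/- For the Cauchy bridge midpoint density, the second derivative of g at x = L/2 vanishes exactly when L = σT (for L ≥ 0). -/
open Real

/-!
With `a = σT/2`, the factor `f(x; T/2)` is the Lorentzian `u(x) = c/(x² + a²)`, so `g` is a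
constant multiple of `u(x) u(L - x)`. Because this product is symmetric about `L/2`, its second
derivative there is `2 (u u'' - u'²)(L/2) = 2 u² (log u)''(L/2)`, and for the Lorentzian
`u u'' - u'² = 2c² (x² - a²)/(x² + a²)⁴`. Hence `g''(L/2) = 0` iff `L/2 = a`, i.e. `L = σT`.
-/

theorem hasDerivAt_mul_comp_const_sub {u u' : ℝ → ℝ} (hu : ∀ x, HasDerivAt u (u' x) x)
    (L x : ℝ) :
    HasDerivAt (fun y => u y * u (L - y)) (u' x * u (L - x) - u x * u' (L - x)) x :=
  ((hu x).fun_mul ((hu (L - x)).comp_const_sub L x)).congr_deriv (by ring)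

theorem deriv_deriv_mul_comp_const_sub_midpoint {u u' u'' : ℝ → ℝ}
    (hu : ∀ x, HasDerivAt u (u' x) x) (hu' : ∀ x, HasDerivAt u' (u'' x) x) (L : ℝ) :
    deriv (deriv fun x => u x * u (L - x)) (L / 2) =
      2 * (u (L / 2) * u'' (L / 2) - u' (L / 2) ^ 2) := by
  have hderiv :
      deriv (fun x => u x * u (L - x)) = fun x => u' x * u (L - x) - u x * u' (L - x) :=
    funext fun x => (hasDerivAt_mul_comp_const_sub hu L x).deriv
  have h₁ := (hu' (L / 2)).fun_mul ((hu (L - L / 2)).comp_const_sub L (L / 2))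
  have h₂ := (hu (L / 2)).fun_mul ((hu' (L - L / 2)).comp_const_sub L (L / 2))
  rw [hderiv, (h₁.fun_sub h₂).deriv, show L - L / 2 = L / 2 by ring]
  ring

noncomputable def lorentzian (c a x : ℝ) : ℝ := c / (x ^ 2 + a ^ 2)

section Lorentzian

variable (c : ℝ) {a : ℝ}

theorem hasDerivAt_lorentzian (ha : a ≠ 0) (x : ℝ) :
    HasDerivAt (lorentzian c a) (-2 * c * x / (x ^ 2 + a ^ 2) ^ 2) x := by
  have hq : x ^ 2 + a ^ 2 ≠ 0 := by positivity
  refine ((hasDerivAt_const x c).fun_div ((hasDerivAt_pow 2 x).add_const (a ^ 2)) hq).congr_deriv ?_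
  push_cast
  ring

theorem hasDerivAt_deriv_lorentzian (ha : a ≠ 0) (x : ℝ) :
    HasDerivAt (fun x => -2 * c * x / (x ^ 2 + a ^ 2) ^ 2)
      (2 * c * (3 * x ^ 2 - a ^ 2) / (x ^ 2 + a ^ 2) ^ 3) x := by
  have hq : x ^ 2 + a ^ 2 ≠ 0 := by positivity
  refine (((hasDerivAt_id' x).const_mul (-2 * c)).fun_div
    (((hasDerivAt_pow 2 x).add_const (a ^ 2)).fun_pow 2) (pow_ne_zero 2 hq)).congr_deriv ?_
  push_cast
  field_simp
  ring

theorem deriv_deriv_lorentzian_mul_comp_const_sub_midpoint (ha : a ≠ 0) (L : ℝ) :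
    deriv (deriv fun x => lorentzian c a x * lorentzian c a (L - x)) (L / 2) =
      4 * c ^ 2 * ((L / 2) ^ 2 - a ^ 2) / ((L / 2) ^ 2 + a ^ 2) ^ 4 := by
  rw [deriv_deriv_mul_comp_const_sub_midpoint (hasDerivAt_lorentzian c ha)
    (hasDerivAt_deriv_lorentzian c ha), lorentzian]
  have hq : (L / 2) ^ 2 + a ^ 2 ≠ 0 := by positivity
  field_simp
  ring

end Lorentzian

/-- The second derivative of the Cauchy bridge midpoint density at `L/2`
vanishes exactly when `L = σT` (for `L ≥ 0`). -/
theorem cauchy_bridge_bifurcation_length (σ T L : ℝ) (hσ : 0 < σ) (hT : 0 < T)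
    (hL0 : 0 ≤ L)
    (f : ℝ → ℝ → ℝ) (hf : ∀ x t, f x t = (σ * t / π) / (x ^ 2 + σ ^ 2 * t ^ 2))
    (g : ℝ → ℝ) (hg : ∀ x, g x = f x (T / 2) * f (L - x) (T / 2) / f L T) :
    deriv (deriv g) (L / 2) = 0 ↔ L = σ * T := by
  set a := σ * T / 2 with ha
  set c := σ * (T / 2) / π
  have hf_half : ∀ x, f x (T / 2) = lorentzian c a x := fun x => by
    rw [hf, lorentzian, ha]
    ring
  have hg_eq : g = fun x => lorentzian c a x * lorentzian c a (L - x) / f L T :=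
    funext fun x => by rw [hg, hf_half, hf_half]
  have hderiv : deriv g =
      fun x => deriv (fun x => lorentzian c a x * lorentzian c a (L - x)) x / f L T :=
    funext fun x => by rw [hg_eq, deriv_div_const]
  rw [hderiv, deriv_div_const,
    deriv_deriv_lorentzian_mul_comp_const_sub_midpoint c (by positivity)]
  have hfL : f L T ≠ 0 := by rw [hf]; positivity
  have hm : (L / 2) ^ 2 + a ^ 2 ≠ 0 := by positivity
  rw [div_eq_zero_iff, or_iff_left hfL, div_eq_zero_iff, or_iff_left (pow_ne_zero 4 hm),
    mul_eq_zero, or_iff_right (by positivity), sub_eq_zero,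
    sq_eq_sq₀ (by positivity) (by positivity)]
  constructor <;> intro h <;> linarith
end

section
/- For L > σT, the points x± = [L ± √(L² − σ²T²)]/2 are critical points of the Cauchy bridge midpoint density g (i.e., g′(x±) = 0), and moreover they are strict local maxima of g. -/
/-!
Writing `c = σT/2`, the Brahmagupta–Fibonacci identity
`(x² + c²)((L − x)² + c²) = (x(L − x) − c²)² + c²L²` turns the midpoint density into
`g x = K / ((x(L − x) − c²)² + c²L²)` with `K > 0`. The points `x±` are exactly the two
distinct roots of `x(L − x) = c²`, i.e. the zeros of the squared term; there the denominator
attains its minimum `c²L² > 0` with vanishing derivative, and it is strictly larger nearby.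
-/

open Real Filter Topology

noncomputable def cauchyKernel (σ x t : ℝ) : ℝ := σ * t / π / (x ^ 2 + σ ^ 2 * t ^ 2)

lemma cauchyKernel_bridge_eq (σ T L x : ℝ) :
    cauchyKernel σ x (T / 2) * cauchyKernel σ (L - x) (T / 2) / cauchyKernel σ L T =
      σ * T * (L ^ 2 + σ ^ 2 * T ^ 2) / (4 * π) /
        ((x * (L - x) - (σ * T / 2) ^ 2) ^ 2 + (σ * T / 2) ^ 2 * L ^ 2) := by
  rcases eq_or_ne (σ * T) 0 with hσT | hσT
  · rcases mul_eq_zero.1 hσT with rfl | rfl <;> simp [cauchyKernel]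
  set c := σ * T / 2
  have hc : 0 < c ^ 2 := by positivity
  have brahmagupta : (x ^ 2 + c ^ 2) * ((L - x) ^ 2 + c ^ 2) =
      (x * (L - x) - c ^ 2) ^ 2 + c ^ 2 * L ^ 2 := by
    rw [sq_add_sq_mul_sq_add_sq]; ring
  have half : σ ^ 2 * (T / 2) ^ 2 = c ^ 2 := by ring
  have full : σ ^ 2 * T ^ 2 = 4 * c ^ 2 := by ring
  simp only [cauchyKernel, half, full]
  rw [div_mul_div_comm, brahmagupta]
  field_simp
  ring

lemma hasDerivAt_div_sq_add_of_root {q : ℝ → ℝ} {q' x₀ : ℝ} (K : ℝ) {m : ℝ}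
    (hq : HasDerivAt q q' x₀) (hq₀ : q x₀ = 0) (hm : m ≠ 0) :
    HasDerivAt (fun x => K / (q x ^ 2 + m)) 0 x₀ := by
  have h := (((hq.pow 2).add_const m).inv (by simpa [hq₀] using hm)).const_mul K
  simpa [div_eq_mul_inv, hq₀] using h

lemma div_sq_add_lt_div {K m y : ℝ} (hK : 0 < K) (hm : 0 < m) (hy : y ≠ 0) :
    K / (y ^ 2 + m) < K / m :=
  div_lt_div_of_pos_left hK hm (lt_add_of_pos_left m (by positivity))

lemma eventually_sub_mul_sub_ne_zero {a b : ℝ} (hab : a ≠ b) :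
    ∀ᶠ x in 𝓝[≠] a, (x - a) * (x - b) ≠ 0 := by
  filter_upwards [self_mem_nhdsWithin,
    (eventually_ne_nhds hab).filter_mono nhdsWithin_le_nhds] with x hxa hxb
  exact mul_ne_zero (sub_ne_zero.2 hxa) (sub_ne_zero.2 hxb)

lemma deriv_eq_zero_and_eventually_lt_of_eq_div_sq_sub_mul_sub_add {φ : ℝ → ℝ} {K m a b : ℝ}
    (hK : 0 < K) (hm : 0 < m) (hab : a ≠ b)
    (hφ : ∀ x, φ x = K / (((x - a) * (x - b)) ^ 2 + m)) :
    deriv φ a = 0 ∧ ∀ᶠ x in 𝓝[≠] a, φ x < φ a := by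
  have hroot : (a - a) * (a - b) = 0 := by simp
  obtain rfl : φ = fun x => K / (((x - a) * (x - b)) ^ 2 + m) := funext hφ
  have hq := ((hasDerivAt_id a).sub_const a).mul ((hasDerivAt_id a).sub_const b)
  refine ⟨(hasDerivAt_div_sq_add_of_root K hq hroot hm.ne').deriv, ?_⟩
  filter_upwards [eventually_sub_mul_sub_ne_zero hab] with x hx
  simpa [hroot] using div_sq_add_lt_div hK hm hx

/-- For `L > σT`, the points `x± = (L ± √(L² − σ²T²))/2` are critical points of
the Cauchy bridge midpoint density, and are strict local maxima. -/
theorem cauchy_bridge_side_peaks (σ T L : ℝ) (hσ : 0 < σ) (hT : 0 < T)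
    (hL : σ * T < L)
    (f : ℝ → ℝ → ℝ) (hf : ∀ x t, f x t = (σ * t / π) / (x ^ 2 + σ ^ 2 * t ^ 2))
    (g : ℝ → ℝ) (hg : ∀ x, g x = f x (T / 2) * f (L - x) (T / 2) / f L T)
    (xp xm : ℝ)
    (hxp : xp = (L + Real.sqrt (L ^ 2 - σ ^ 2 * T ^ 2)) / 2)
    (hxm : xm = (L - Real.sqrt (L ^ 2 - σ ^ 2 * T ^ 2)) / 2) :
    deriv g xp = 0 ∧ deriv g xm = 0 ∧
      (∀ᶠ x in nhdsWithin xp {xp}ᶜ, g x < g xp) ∧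
      (∀ᶠ x in nhdsWithin xm {xm}ᶜ, g x < g xm) := by
  have hσT : 0 < σ * T := mul_pos hσ hT
  have hdisc : 0 < L ^ 2 - σ ^ 2 * T ^ 2 := by nlinarith
  have hsqrt := Real.sq_sqrt hdisc.le
  have hne : xp ≠ xm := by
    have := Real.sqrt_pos.2 hdisc
    rw [hxp, hxm]; intro h; linarith
  have hK : 0 < σ * T * (L ^ 2 + σ ^ 2 * T ^ 2) / (4 * π) := by positivity
  have hm : 0 < (σ * T / 2) ^ 2 * L ^ 2 := by have := hσT.trans hL; positivity
  have hvieta : ∀ x, (x * (L - x) - (σ * T / 2) ^ 2) ^ 2 = ((x - xp) * (x - xm)) ^ 2 := by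
    intro x
    have : x * (L - x) - (σ * T / 2) ^ 2 = -((x - xp) * (x - xm)) := by
      rw [hxp, hxm]; linear_combination (-1 / 4 : ℝ) * hsqrt
    rw [this, neg_sq]
  have hg' : ∀ x, g x = σ * T * (L ^ 2 + σ ^ 2 * T ^ 2) / (4 * π) /
      (((x - xp) * (x - xm)) ^ 2 + (σ * T / 2) ^ 2 * L ^ 2) := by
    intro x
    rw [hg, show f = cauchyKernel σ from funext₂ hf, cauchyKernel_bridge_eq, hvieta]
  obtain ⟨hp_crit, hp_max⟩ :=
    deriv_eq_zero_and_eventually_lt_of_eq_div_sq_sub_mul_sub_add hK hm hne hg'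
  obtain ⟨hm_crit, hm_max⟩ :=
    deriv_eq_zero_and_eventually_lt_of_eq_div_sq_sub_mul_sub_add (φ := g) hK hm hne.symm
      fun x => by rw [hg', mul_comm (x - xp)]
  exact ⟨hp_crit, hm_crit, hp_max, hm_max⟩
end

section
/- For the Cauchy bridge midpoint density g with L > σT, g(L/2) < g(x₊) where x₊ = [L + √(L² − σ²T²)]/2; i.e., past the bifurcation the central point is strictly lower than the side peaks. -/
open Real

/-! Up to a positive constant, `g x` is the reciprocal of
`D x = (x² + a²)((L - x)² + a²)` with `a = σT/2`, and in terms of `p = x(L - x)` one has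
`D = (p - a²)² + a²L²`. So `D` is minimal exactly where `x(L - x) = a²`, which holds at `x₊`,
while at the center `p = L²/4 > a²` because `L > σT`. -/

def bridgeDenom (a L x : ℝ) : ℝ := (x ^ 2 + a ^ 2) * ((L - x) ^ 2 + a ^ 2)

lemma bridgeDenom_eq (a L x : ℝ) :
    bridgeDenom a L x = (x * (L - x) - a ^ 2) ^ 2 + a ^ 2 * L ^ 2 := by
  unfold bridgeDenom; ring

lemma bridgeDenom_lt_of_mul_sub_eq {a L x y : ℝ} (hx : x * (L - x) = a ^ 2)
    (hy : y * (L - y) ≠ a ^ 2) : bridgeDenom a L x < bridgeDenom a L y := by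
  rw [bridgeDenom_eq, bridgeDenom_eq, hx, sub_self]
  have : 0 < (y * (L - y) - a ^ 2) ^ 2 := sq_pos_of_ne_zero (sub_ne_zero.mpr hy)
  linarith

lemma cauchy_mul_cauchy_eq_div_bridgeDenom (σ t L x : ℝ) :
    σ * t / π / (x ^ 2 + σ ^ 2 * t ^ 2) * (σ * t / π / ((L - x) ^ 2 + σ ^ 2 * t ^ 2)) =
      (σ * t / π) ^ 2 / bridgeDenom (σ * t) L x := by
  rw [div_mul_div_comm, ← sq, bridgeDenom, mul_pow]

/-- Past the bifurcation (`L > σT`), the Cauchy bridge midpoint density is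
strictly lower at the center than at the side peak. -/
theorem cauchy_bridge_center_below_peak (σ T L : ℝ) (hσ : 0 < σ) (hT : 0 < T)
    (hL : σ * T < L)
    (f : ℝ → ℝ → ℝ) (hf : ∀ x t, f x t = (σ * t / π) / (x ^ 2 + σ ^ 2 * t ^ 2))
    (g : ℝ → ℝ) (hg : ∀ x, g x = f x (T / 2) * f (L - x) (T / 2) / f L T) :
    g (L / 2) < g ((L + Real.sqrt (L ^ 2 - σ ^ 2 * T ^ 2)) / 2) := by
  have hσT : 0 < σ * T := mul_pos hσ hT
  set s := √(L ^ 2 - σ ^ 2 * T ^ 2)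
  have hs : s ^ 2 = L ^ 2 - σ ^ 2 * T ^ 2 := sq_sqrt (by nlinarith)
  have hpeak : (L + s) / 2 * (L - (L + s) / 2) = (σ * (T / 2)) ^ 2 := by
    linear_combination (-1 / 4) * hs
  have hcenter : L / 2 * (L - L / 2) ≠ (σ * (T / 2)) ^ 2 := by nlinarith
  simp only [hg, hf, cauchy_mul_cauchy_eq_div_bridgeDenom]
  refine div_lt_div_of_pos_right (div_lt_div_of_pos_left (by positivity) ?_ ?_) (by positivity)
  · unfold bridgeDenom; positivity
  · exact bridgeDenom_lt_of_mul_sub_eq hpeak hcenter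
end
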